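/- arXiv:1910.11324 — 2 statements merged into one kernel-verified Lean document; each statement's English description precedes it below -/
import Mathlib

section
/- Let γ > 0 be real, let S₁, S₂ ⊆ ℤ be finite intervals of integers, and set Y := S₁ ∪ S₂ and X := (S₁+S₁) ∪ (S₂+S₂). Let C ⊆ X and D ⊆ Y. If |D| ≥ (1+4γ)|Y| − |C|/2, then there are at least γ²·|D|² pairs (b₁,b₂) ∈ D × D such that b₁ + b₂ ∈ C. -/
/-!
Write `r(s)` for the number of representations `s = a + b` with `(a, b) ∈ A × B`. Pollard's
inequality `t (|A| + |B| - t) ≤ ∑ₛ min (r(s), t)`, valid for `t ≤ |A|, |B|`, is applied with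
`A = B = D`: if `D + D` and `C` lie in a set `X`, the sums outside `C` contribute at most
`t (|X| - |C|)`, leaving at least `t (2|D| + |C| - |X| - t)` pairs with sum in `C`. For an
interval `Y`, `Y + Y` lies in an interval `X` with `|X| = 2|Y| - 1`, and `t = ⌈ε⌉` gives `ε²`
such pairs once `ε ≤ |D| + |C|/2 - |Y|`. Two intervals either overlap, and then their union is an
interval, or are disjoint, and then one of them carries half of the surplus `|D| + |C|/2 - |Y|`.
-/

open Pointwise

/-- An arithmetic progression of integers (as a finite set). -/
def IsAP (P : Finset ℤ) : Prop :=
  ∃ a d : ℤ, ∃ L : ℕ, P = (Finset.range L).image (fun j : ℕ => a + (j : ℤ) * d)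

/-- `Λ(n,k)`: the family of sets `A ⊆ [n] = {1,…,n}` with `|A| = k` and `|A+A| ≤ λk`. -/
def Lambda (lam : ℝ) (n k : ℕ) : Set (Finset ℤ) :=
  {A | A ⊆ Finset.Icc 1 (n : ℤ) ∧ A.card = k ∧ ((A + A).card : ℝ) ≤ lam * k}

/-- `c(λ,ε) = 2^20 λ^2 log(1/ε) + 2^560 λ^32`. -/
noncomputable def cConst (lam ε : ℝ) : ℝ :=
  2 ^ 20 * lam ^ 2 * Real.log (1 / ε) + 2 ^ 560 * lam ^ 32

/-- `δ = 2⁻³² λ⁻³`. -/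
noncomputable def deltaConst (lam : ℝ) : ℝ := (2 : ℝ) ^ (-32 : ℤ) * lam ^ (-3 : ℤ)

/-- `f(λ) = 2^10 λ^3`. -/
noncomputable def fConst (lam : ℝ) : ℝ := 2 ^ 10 * lam ^ 3

/-- The maximum of a finite set of integers (0 for the empty set). -/
def maxI (A : Finset ℤ) : ℤ := WithBot.unbotD 0 A.max

/-- The minimum of a finite set of integers (0 for the empty set). -/
def minI (A : Finset ℤ) : ℤ := WithTop.untopD 0 A.min

/-- `Λ*(n,k)`: the sets in `Λ(n,k)` contained in an arithmetic progression of
length at most `λk/2 + c(λ,ε)`. -/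
noncomputable def LambdaStar (lam ε : ℝ) (n k : ℕ) : Set (Finset ℤ) :=
  {A ∈ Lambda lam n k |
    ∃ P : Finset ℤ, IsAP P ∧ A ⊆ P ∧ (P.card : ℝ) ≤ lam * k / 2 + cConst lam ε}

/-- The family `ℐ` (here `K` denotes the natural number `λk/2`):
sets `A ⊆ {−λk/2, …, λk}` with `|A| = k`, `|A+A| ≤ λk`, `b(A) ≤ δk`,
`r(A) ≥ c(λ,ε)`, and `{x ∈ A : x ≤ 0}`, `{x ∈ A : x > λk/2}` non-empty. -/
noncomputable def Ical (lam ε : ℝ) (k K : ℕ) : Set (Finset ℤ) :=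
  {A | A ⊆ Finset.Icc (-(K : ℤ)) (2 * (K : ℤ)) ∧ A.card = k ∧
    ((A + A).card : ℝ) ≤ lam * k ∧
    ((A \ Finset.Icc 1 (K : ℤ)).card : ℝ) ≤ deltaConst lam * k ∧
    cConst lam ε ≤ (maxI A : ℝ) - (minI A : ℝ) - lam * k / 2 ∧
    (A.filter fun x => x ≤ 0).Nonempty ∧
    (A.filter fun x => (K : ℤ) < x).Nonempty}

/-- The family `ℱ`: sets `A ∈ Λ(n,k)` contained in `{a + jd : −λk/2 ≤ j ≤ λk}`
with all but at most `δk` elements in `{a + jd : 1 ≤ j ≤ λk/2}`. -/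
noncomputable def Fcal (lam : ℝ) (n k K : ℕ) : Set (Finset ℤ) :=
  {A ∈ Lambda lam n k | ∃ a d : ℤ,
    A ⊆ (Finset.Icc (-(K : ℤ)) (2 * (K : ℤ))).image (fun j => a + j * d) ∧
    ((A \ (Finset.Icc (1 : ℤ) (K : ℤ)).image (fun j => a + j * d)).card : ℝ) ≤
      deltaConst lam * k}

open Finset

namespace Finset

section AddGroup

variable {G : Type*} [AddGroup G] [DecidableEq G]

lemma sum_addConvolution (A B : Finset G) : ∑ s ∈ A + B, A.addConvolution B s = #A * #B := by
  rw [← card_product]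
  exact (card_eq_sum_card_fiberwise fun p hp =>
    add_mem_add (mem_product.1 hp).1 (mem_product.1 hp).2).symm

lemma addConvolution_mono_left {A' A : Finset G} (h : A' ⊆ A) (B : Finset G) (x : G) :
    A'.addConvolution B x ≤ A.addConvolution B x :=
  card_le_card (filter_subset_filter _ (product_subset_product h Subset.rfl))

lemma addConvolution_insert_add {a b : G} {A B : Finset G} (ha : a ∉ A) (hb : b ∈ B) :
    (insert a A).addConvolution B (a + b) = A.addConvolution B (a + b) + 1 := by
  have hmem : a ∈ (a + b) +ᵥ -B := mem_vadd_finset.2 ⟨-b, neg_mem_neg hb, by simp⟩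
  rw [← card_inter_vadd_neg, ← card_inter_vadd_neg, insert_inter_of_mem hmem,
    card_insert_of_notMem fun h => ha (mem_inter.1 h).1]

lemma card_filter_add_mem_eq_sum_addConvolution (A B C : Finset G) :
    #{p ∈ A ×ˢ B | p.1 + p.2 ∈ C} = ∑ s ∈ C, A.addConvolution B s := by
  rw [card_eq_sum_card_fiberwise (f := fun p => p.1 + p.2) (t := C)
    (s := {p ∈ A ×ˢ B | p.1 + p.2 ∈ C}) fun p hp => (mem_filter.1 hp).2]
  refine sum_congr rfl fun s hs => ?_
  rw [filter_filter]
  exact congrArg card (filter_congr fun p _ => ⟨And.right, fun h => ⟨h ▸ hs, h⟩⟩)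

lemma card_filter_add_mem_mono {A' A B' B C' C : Finset G} (hA : A' ⊆ A) (hB : B' ⊆ B)
    (hC : C' ⊆ C) : #{p ∈ A' ×ˢ B' | p.1 + p.2 ∈ C'} ≤ #{p ∈ A ×ˢ B | p.1 + p.2 ∈ C} :=
  card_le_card fun p hp => by
    simp only [mem_filter, mem_product] at hp ⊢
    exact ⟨⟨hA hp.1.1, hB hp.1.2⟩, hC hp.2⟩

end AddGroup

lemma exists_subset_card_eq_upwardClosed {α : Type*} [LinearOrder α] {t : ℕ} {B : Finset α}
    (ht : t ≤ #B) : ∃ B' ⊆ B, #B' = t ∧ ∀ x ∈ B, ∀ y ∈ B', y ≤ x → x ∈ B' := by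
  induction B using Finset.induction_on_max generalizing t with
  | empty =>
    rw [card_empty, Nat.le_zero] at ht
    exact ⟨∅, empty_subset _, ht ▸ card_empty, by simp⟩
  | insert a B hlt ih =>
    have ha : a ∉ B := fun h => lt_irrefl a (hlt a h)
    cases t with
    | zero => exact ⟨∅, empty_subset _, rfl, by simp⟩
    | succ t =>
      rw [card_insert_of_notMem ha] at ht
      obtain ⟨B', hB'B, hcard, hup⟩ := ih (Nat.le_of_succ_le_succ ht)
      refine ⟨insert a B', insert_subset_insert a hB'B,
        by rw [card_insert_of_notMem fun h => ha (hB'B h), hcard], ?_⟩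
      intro x hx y hy hyx
      rcases mem_insert.1 hx with rfl | hxB
      · exact mem_insert_self _ _
      rcases mem_insert.1 hy with rfl | hyB'
      · exact absurd (hlt x hxB) (not_lt.2 hyx)
      · exact mem_insert_of_mem (hup x hxB y hyB' hyx)
lemma card_add_half_card_sub_card_union_le {α : Type*} [DecidableEq α]
    {S₁ S₂ X₁ X₂ C D : Finset α} (hS : Disjoint S₁ S₂) (hD : D ⊆ S₁ ∪ S₂) (hC : C ⊆ X₁ ∪ X₂) :
    (#D : ℝ) + #C / 2 - #(S₁ ∪ S₂) ≤
      (#(D ∩ S₁) + #(C ∩ X₁) / 2 - #S₁) + (#(D ∩ S₂) + #(C ∩ X₂) / 2 - #S₂) := by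
  have hDcard : #D = #(D ∩ S₁) + #(D ∩ S₂) := by
    rw [← card_union_of_disjoint (hS.mono inter_subset_right inter_subset_right),
      ← inter_union_distrib_left, inter_eq_left.2 hD]
  have hCcard : #C ≤ #(C ∩ X₁) + #(C ∩ X₂) := by
    conv_lhs => rw [← inter_eq_left.2 hC, inter_union_distrib_left]
    exact card_union_le _ _
  have hCcard' : (#C : ℝ) ≤ #(C ∩ X₁) + #(C ∩ X₂) := by exact_mod_cast hCcard
  rw [card_union_of_disjoint hS, hDcard]
  push_cast
  linarith

section LinearOrderedAddCommGroup

variable {G : Type*} [AddCommGroup G] [LinearOrder G] [IsOrderedAddMonoid G]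

lemma addConvolution_add_lt_card {a b : G} {A B B' : Finset G} (hA : ∀ x ∈ A, x < a)
    (hB' : ∀ x ∈ B, ∀ y ∈ B', y ≤ x → x ∈ B') (hb : b ∈ B') :
    A.addConvolution B (a + b) < #B' := by
  refine lt_of_le_of_lt ?_ (card_erase_lt_of_mem hb)
  refine card_le_card_of_injOn Prod.snd (fun p hp => ?_) fun p hp q hq hpq => ?_
  · simp only [coe_filter, mem_product, Set.mem_ofPred_eq] at hp
    obtain ⟨⟨hp₁, hp₂⟩, hsum⟩ := hp
    have hbp : b < p.2 := by
      by_contra! h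
      exact (add_lt_add_of_lt_of_le (hA _ hp₁) h).ne hsum
    exact mem_erase.2 ⟨hbp.ne', hB' _ hp₂ b hb hbp.le⟩
  · simp only [coe_filter, Set.mem_ofPred_eq] at hp hq
    have hsum := hp.2.trans hq.2.symm
    rw [hpq] at hsum
    exact Prod.ext (add_right_cancel hsum) hpq

theorem pollard {t : ℕ} {A B : Finset G} (hA : t ≤ #A) (hB : t ≤ #B) :
    t * (#A + #B - t) ≤ ∑ s ∈ A + B, min (A.addConvolution B s) t := by
  induction A using Finset.induction_on_max with
  | empty =>
    rw [card_empty, Nat.le_zero] at hA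
    simp [hA]
  | insert a A hlt ih =>
    have ha : a ∉ A := fun h => lt_irrefl a (hlt a h)
    rw [card_insert_of_notMem ha] at hA ⊢
    rcases Nat.lt_or_eq_of_le hA with hA | rfl
    swap
    · have hmin (s : G) : min ((insert a A).addConvolution B s) (#A + 1) =
          (insert a A).addConvolution B s :=
        min_eq_left ((addConvolution_le_card_left).trans (card_insert_le a A))
      simp only [hmin, sum_addConvolution, card_insert_of_notMem ha]
      rw [Nat.add_sub_cancel_left]
    obtain ⟨B', hB'B, hB'card, hB'up⟩ := exists_subset_card_eq_upwardClosed hB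
    set T := B'.image (a + ·)
    have hT : T ⊆ insert a A + B := fun s hs => by
      obtain ⟨b, hb, rfl⟩ := mem_image.1 hs
      exact add_mem_add (mem_insert_self a A) (hB'B hb)
    have hTcard : #T = t := by rw [card_image_of_injective _ (add_right_injective a), hB'card]
    -- for `b` among the `t` largest elements of `B`, `a + b` gains the representation `(a, b)`
    -- and had fewer than `t` before: each of them uses a larger element of `B`
    have hstep (s : G) : min (A.addConvolution B s) t + (if s ∈ T then 1 else 0) ≤
        min ((insert a A).addConvolution B s) t := by
      split_ifs with hs
      · obtain ⟨b, hb, rfl⟩ := mem_image.1 hs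
        have hlt := addConvolution_add_lt_card hlt hB'up hb
        rw [addConvolution_insert_add ha (hB'B hb)]
        omega
      · exact min_le_min_right t (addConvolution_mono_left (subset_insert a A) B s)
    calc t * (#A + 1 + #B - t) = t * (#A + #B - t) + #T := by
          rw [hTcard, show #A + 1 + #B - t = #A + #B - t + 1 by omega, mul_add_one]
      _ ≤ ∑ s ∈ A + B, min (A.addConvolution B s) t + #T := by
          gcongr
          exact ih (Nat.lt_succ_iff.1 hA)
      _ ≤ ∑ s ∈ insert a A + B, (min (A.addConvolution B s) t + if s ∈ T then 1 else 0) := by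
          rw [sum_add_distrib, sum_ite_mem, inter_eq_right.2 hT, sum_const, smul_eq_mul, mul_one]
          gcongr
          exact subset_insert a A
      _ ≤ ∑ s ∈ insert a A + B, min ((insert a A).addConvolution B s) t :=
          sum_le_sum fun s _ => hstep s

theorem mul_sub_le_card_filter_add_mem {t : ℕ} {A B C X : Finset G} (hA : t ≤ #A)
    (hB : t ≤ #B) (hABX : A + B ⊆ X) (hCX : C ⊆ X) :
    (t : ℤ) * (#A + #B + #C - #X - t) ≤ #{p ∈ A ×ˢ B | p.1 + p.2 ∈ C} := by
  have hmissing : #((A + B) \ C) ≤ #X - #C :=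
    card_sdiff_of_subset hCX ▸ card_le_card (sdiff_subset_sdiff hABX Subset.rfl)
  have hsplit : ∑ s ∈ A + B, min (A.addConvolution B s) t ≤
      #{p ∈ A ×ˢ B | p.1 + p.2 ∈ C} + (#X - #C) * t := by
    rw [card_filter_add_mem_eq_sum_addConvolution, ← sum_inter_add_sum_sdiff (A + B) C]
    gcongr
    · exact (sum_le_sum_of_subset inter_subset_right).trans'
        (sum_le_sum fun _ _ => min_le_left _ _)
    · exact (sum_le_card_nsmul _ _ t fun _ _ => min_le_right _ _).trans
        (by rw [smul_eq_mul]; gcongr)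
  have hpollard := (pollard hA hB).trans hsplit
  have hCX' : #C ≤ #X := card_le_card hCX
  zify [hCX', hA.trans (Nat.le_add_right _ _)] at hpollard
  linarith

theorem sq_le_card_filter_add_mem {C D X : Finset G} {ε : ℝ} (hDX : D + D ⊆ X) (hCX : C ⊆ X)
    (hε : 0 ≤ ε) (h : 2 * ε + 1 ≤ 2 * #D + #C - #X) :
    ε ^ 2 ≤ #{p ∈ D ×ˢ D | p.1 + p.2 ∈ C} := by
  have hCX' : (#C : ℝ) ≤ #X := by exact_mod_cast card_le_card hCX
  have htD : ⌈ε⌉₊ ≤ #D := Nat.ceil_le.2 (by linarith)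
  have hcount : (⌈ε⌉₊ : ℝ) * (#D + #D + #C - #X - ⌈ε⌉₊) ≤ #{p ∈ D ×ˢ D | p.1 + p.2 ∈ C} := by
    exact_mod_cast mul_sub_le_card_filter_add_mem htD htD hDX hCX
  have hceil : ε ≤ ⌈ε⌉₊ := Nat.le_ceil ε
  have hceil' : (⌈ε⌉₊ : ℝ) < ε + 1 := Nat.ceil_lt_add_one hε
  calc ε ^ 2 = ε * ε := sq ε
    _ ≤ ⌈ε⌉₊ * (#D + #D + #C - #X - ⌈ε⌉₊) := mul_le_mul hceil (by linarith) hε (hε.trans hceil)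
    _ ≤ _ := hcount

end LinearOrderedAddCommGroup

end Finset

lemma sq_le_card_filter_add_mem_of_subset_Icc {a b : ℤ} {C D : Finset ℤ} {ε : ℝ}
    (hD : D ⊆ Icc a b) (hC : C ⊆ Icc a b + Icc a b) (hε : 0 < ε)
    (h : ε ≤ #D + #C / 2 - #(Icc a b)) :
    ε ^ 2 ≤ #{p ∈ D ×ˢ D | p.1 + p.2 ∈ C} := by
  have hab : a ≤ b := by
    by_contra hba
    rw [Icc_eq_empty hba, add_empty, subset_empty] at hC
    rw [Icc_eq_empty hba, subset_empty] at hD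
    simp [hC, hD] at h
    linarith
  have hX : Icc a b + Icc a b ⊆ Icc (a + a) (b + b) := Icc_add_Icc_subset a b a b
  have hXcard : #(Icc (a + a) (b + b)) + 1 = 2 * #(Icc a b) := by
    simp only [Int.card_Icc]
    omega
  have hXcard' : (#(Icc (a + a) (b + b)) : ℝ) + 1 = 2 * #(Icc a b) := by exact_mod_cast hXcard
  exact sq_le_card_filter_add_mem ((add_subset_add hD hD).trans hX) (hC.trans hX) hε.le
    (by linarith)

lemma sq_le_card_filter_add_mem_of_subset_Icc_union_Icc {a₁ b₁ a₂ b₂ : ℤ} {C D : Finset ℤ}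
    {ε : ℝ} (hD : D ⊆ Icc a₁ b₁ ∪ Icc a₂ b₂)
    (hC : C ⊆ (Icc a₁ b₁ + Icc a₁ b₁) ∪ (Icc a₂ b₂ + Icc a₂ b₂)) (hε : 0 < ε)
    (h : 2 * ε ≤ #D + #C / 2 - #(Icc a₁ b₁ ∪ Icc a₂ b₂)) :
    ε ^ 2 ≤ #{p ∈ D ×ˢ D | p.1 + p.2 ∈ C} := by
  by_cases hS : Disjoint (Icc a₁ b₁) (Icc a₂ b₂)
  · have hsplit := card_add_half_card_sub_card_union_le hS hD hC
    have hhalf : ε ≤ #(D ∩ Icc a₁ b₁) + #(C ∩ (Icc a₁ b₁ + Icc a₁ b₁)) / 2 - #(Icc a₁ b₁) ∨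
        ε ≤ #(D ∩ Icc a₂ b₂) + #(C ∩ (Icc a₂ b₂ + Icc a₂ b₂)) / 2 - #(Icc a₂ b₂) := by
      by_contra! h
      linarith
    rcases hhalf with h | h <;>
    · refine (sq_le_card_filter_add_mem_of_subset_Icc inter_subset_right inter_subset_right hε
        h).trans ?_
      exact_mod_cast card_filter_add_mem_mono inter_subset_left inter_subset_left inter_subset_left
  · obtain ⟨y, hy₁, hy₂⟩ := not_disjoint_iff.1 hS
    rw [mem_Icc] at hy₁ hy₂
    have hY : Icc a₁ b₁ ∪ Icc a₂ b₂ = Icc (min a₁ a₂) (max b₁ b₂) := by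
      ext z
      simp only [mem_union, mem_Icc]
      omega
    have hXY : (Icc a₁ b₁ + Icc a₁ b₁) ∪ (Icc a₂ b₂ + Icc a₂ b₂) ⊆
        (Icc a₁ b₁ ∪ Icc a₂ b₂) + (Icc a₁ b₁ ∪ Icc a₂ b₂) :=
      union_subset (add_subset_add subset_union_left subset_union_left)
        (add_subset_add subset_union_right subset_union_right)
    rw [hY] at h hD hXY
    exact sq_le_card_filter_add_mem_of_subset_Icc hD (hC.trans hXY) hε (by linarith)

/-- supersaturation for unions of two intervals. -/
theorem statement4 (γ : ℝ) (hγ : 0 < γ)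
    (S₁ S₂ : Finset ℤ) (h₁ : ∃ a b : ℤ, S₁ = Finset.Icc a b)
    (h₂ : ∃ a b : ℤ, S₂ = Finset.Icc a b)
    (C D : Finset ℤ) (hC : C ⊆ (S₁ + S₁) ∪ (S₂ + S₂)) (hD : D ⊆ S₁ ∪ S₂)
    (hcard : (1 + 4 * γ) * ((S₁ ∪ S₂).card : ℝ) - (C.card : ℝ) / 2 ≤ (D.card : ℝ)) :
    γ ^ 2 * (D.card : ℝ) ^ 2 ≤
      ((((D ×ˢ D).filter fun p => p.1 + p.2 ∈ C)).card : ℝ) := by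
  obtain ⟨a₁, b₁, rfl⟩ := h₁
  obtain ⟨a₂, b₂, rfl⟩ := h₂
  rcases D.eq_empty_or_nonempty with rfl | ⟨x, hx⟩
  · simp
  have hDY : (#D : ℝ) ≤ #(Icc a₁ b₁ ∪ Icc a₂ b₂) := by exact_mod_cast card_le_card hD
  have hY : (0 : ℝ) < #(Icc a₁ b₁ ∪ Icc a₂ b₂) := by exact_mod_cast card_pos.2 ⟨x, hD hx⟩
  calc γ ^ 2 * (#D : ℝ) ^ 2 = (γ * #D) ^ 2 := (mul_pow γ _ 2).symm
    _ ≤ (2 * γ * #(Icc a₁ b₁ ∪ Icc a₂ b₂)) ^ 2 := by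
      gcongr
      nlinarith
    _ ≤ _ := sq_le_card_filter_add_mem_of_subset_Icc_union_Icc hD hC (by positivity) (by linarith)
end

section
/- Let λ ≥ 2³⁰ be real. There exists N ∈ ℕ such that for all n,k ∈ ℕ with n,k ≥ N, λk ≤ n and λk/2 ∈ ℕ, the number of sets A ⊆ [n] with |A| = k and |A+A| ≤ λk is at least exp(2⁻⁸·λ^{1/2})·(n²/k)·binom(λk/2, k). -/
/-!
With `s = ⌈√λ⌉`, consider the sets `a + d • ({1, 2} ∪ B ∪ C)` with `B` a `(k - s - 2)`-subset of
`[3, M]` and `C` an `s`-subset of `(M, M + T]`, where `T ≈ sλ` and `M ≈ λk/2 - (T + s²)/2`. Only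
`C + C` leaves the interval `[2, 2M + T]`, so the sumset has at most `2M + T + s² ≤ λk` elements;
the two smallest elements `a + d`, `a + 2d` recover `a` and `d`, so distinct parameters give
distinct sets. There are about `n² / λk` admissible pairs `(d, a)`. Passing from `binom(λk/2, k)`
to `binom(M - 2, k - s - 2)` costs a factor about `(λ/2)^s e^{6s/5}`, while choosing `C` gains
`binom(T, s) ≈ (λe)^s`, so the count exceeds `(n²/k) binom(λk/2, k)` by roughly `2^s e^{-s/5}`,
which dominates `λ e^{√λ/256}`.
-/

open Pointwise

section Construction

open Finset

def affineImage (d a : ℤ) (S : Finset ℤ) : Finset ℤ := S.image (a + d * ·)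

lemma card_affineImage {d : ℤ} (a : ℤ) (S : Finset ℤ) (hd : d ≠ 0) :
    (affineImage d a S).card = S.card :=
  card_image_of_injective _ fun x y hxy => by simpa [hd] using hxy

lemma add_mul_mem_affineImage {d x : ℤ} (a : ℤ) {S : Finset ℤ} (hx : x ∈ S) :
    a + d * x ∈ affineImage d a S :=
  mem_image_of_mem _ hx

lemma card_affineImage_add_self_le (d a : ℤ) (S : Finset ℤ) :
    (affineImage d a S + affineImage d a S).card ≤ (S + S).card := by
  refine le_trans (card_le_card ?_) (card_image_le (f := (2 * a + d * ·)))
  intro z hz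
  obtain ⟨_, hu, _, hv, rfl⟩ := mem_add.1 hz
  obtain ⟨x, hx, rfl⟩ := mem_image.1 hu
  obtain ⟨y, hy, rfl⟩ := mem_image.1 hv
  exact mem_image.2 ⟨x + y, add_mem_add hx hy, by ring⟩

lemma affineImage_subset_Icc {d a L n : ℤ} {S : Finset ℤ} (hd : 0 ≤ d)
    (hS : S ⊆ Icc 1 L) (hn : a + d * L ≤ n) (h1 : 1 ≤ a + d) :
    affineImage d a S ⊆ Icc 1 n := by
  intro z hz
  obtain ⟨x, hx, rfl⟩ := mem_image.1 hz
  obtain ⟨hx1, hxL⟩ := mem_Icc.1 (hS hx)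
  exact mem_Icc.2 ⟨by nlinarith, by nlinarith⟩

-- The two smallest elements of `affineImage d a S` are `a + d` and `a + 2 * d`.
lemma affineImage_injective {d a d' a' : ℤ} {S S' : Finset ℤ} (hd : 1 ≤ d) (hd' : 1 ≤ d')
    (hS : ∀ x ∈ S, 1 ≤ x) (hS' : ∀ x ∈ S', 1 ≤ x) (h1 : 1 ∈ S) (h1' : 1 ∈ S')
    (h2 : 2 ∈ S) (h2' : 2 ∈ S') (h : affineImage d a S = affineImage d' a' S') :
    d = d' ∧ a = a' ∧ S = S' := by
  obtain ⟨y₁, hy₁, e₁⟩ := mem_image.1 (h ▸ add_mul_mem_affineImage a h1)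
  obtain ⟨y₁', hy₁', e₁'⟩ := mem_image.1 (h ▸ add_mul_mem_affineImage a' h1')
  have hmin : a + d = a' + d' := by
    nlinarith [hS' y₁ hy₁, hS y₁' hy₁']
  obtain ⟨y₂, hy₂, e₂⟩ := mem_image.1 (h ▸ add_mul_mem_affineImage a h2)
  obtain ⟨y₂', hy₂', e₂'⟩ := mem_image.1 (h ▸ add_mul_mem_affineImage a' h2')
  have hge : ∀ {d d' y : ℤ}, 1 ≤ d → 1 ≤ d' → d = d' * (y - 1) → d' ≤ d := by
    intro d d' y hd hd' e
    have : 1 ≤ y - 1 := by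
      by_contra hy
      nlinarith
    nlinarith
  have hdd : d = d' :=
    le_antisymm (hge (y := y₂') hd' hd (by linarith)) (hge (y := y₂) hd hd' (by linarith))
  subst hdd
  have haa : a = a' := by linarith
  subst haa
  refine ⟨rfl, rfl, image_injective (fun x y hxy => ?_) h⟩
  simpa [show d ≠ 0 by omega] using hxy

def baseSet (B C : Finset ℤ) : Finset ℤ := insert 1 (insert 2 (B ∪ C))

lemma one_mem_baseSet (B C : Finset ℤ) : 1 ∈ baseSet B C := mem_insert_self _ _

lemma two_mem_baseSet (B C : Finset ℤ) : 2 ∈ baseSet B C :=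
  mem_insert_of_mem (mem_insert_self _ _)

variable {M L : ℤ} {B C : Finset ℤ}

lemma mem_baseSet_cases (hM : 2 ≤ M) (hB : B ⊆ Icc 3 M) {x : ℤ} (hx : x ∈ baseSet B C) :
    x ∈ Icc 1 M ∨ x ∈ C := by
  simp only [baseSet, mem_insert, mem_union] at hx
  rcases hx with rfl | rfl | hx | hx
  · exact Or.inl (mem_Icc.2 ⟨le_rfl, by omega⟩)
  · exact Or.inl (mem_Icc.2 ⟨by omega, hM⟩)
  · have := mem_Icc.1 (hB hx)
    exact Or.inl (mem_Icc.2 ⟨by omega, this.2⟩)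
  · exact Or.inr hx

lemma baseSet_subset_Icc (hM : 2 ≤ M) (hB : B ⊆ Icc 3 M) (hC : C ⊆ Icc (M + 1) L)
    (hML : M ≤ L) : baseSet B C ⊆ Icc 1 L := by
  intro x hx
  rcases mem_baseSet_cases hM hB hx with hx | hx
  · have := mem_Icc.1 hx; exact mem_Icc.2 ⟨this.1, by omega⟩
  · have := mem_Icc.1 (hC hx); exact mem_Icc.2 ⟨by omega, this.2⟩

lemma card_baseSet (hM : 2 ≤ M) (hB : B ⊆ Icc 3 M) (hC : C ⊆ Icc (M + 1) L) :
    (baseSet B C).card = B.card + C.card + 2 := by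
  have hB3 : ∀ x ∈ B, 3 ≤ x ∧ x ≤ M := fun x hx => mem_Icc.1 (hB hx)
  have hCM : ∀ x ∈ C, M + 1 ≤ x ∧ x ≤ L := fun x hx => mem_Icc.1 (hC hx)
  have h1 : (1 : ℤ) ∉ insert 2 (B ∪ C) := by
    simp only [mem_insert, mem_union, not_or]
    exact ⟨by omega, fun h => by have := hB3 1 h; omega, fun h => by have := hCM 1 h; omega⟩
  have h2 : (2 : ℤ) ∉ B ∪ C := by
    simp only [mem_union, not_or]
    exact ⟨fun h => by have := hB3 2 h; omega, fun h => by have := hCM 2 h; omega⟩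
  have hdisj : Disjoint B C := disjoint_left.2 fun x hxB hxC => by
    have := hB3 x hxB; have := hCM x hxC; omega
  rw [baseSet, card_insert_of_notMem h1, card_insert_of_notMem h2, card_union_of_disjoint hdisj]

lemma baseSet_add_self_subset (hM : 2 ≤ M) (hB : B ⊆ Icc 3 M) (hC : C ⊆ Icc (M + 1) L)
    (hML : M ≤ L) : baseSet B C + baseSet B C ⊆ Icc 2 (M + L) ∪ (C + C) := by
  intro z hz
  obtain ⟨x, hx, y, hy, rfl⟩ := mem_add.1 hz
  have hxL := mem_Icc.1 (baseSet_subset_Icc hM hB hC hML hx)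
  have hyL := mem_Icc.1 (baseSet_subset_Icc hM hB hC hML hy)
  rcases mem_baseSet_cases hM hB hx with hx' | hx'
  · exact mem_union_left _ (mem_Icc.2 ⟨by omega, by have := mem_Icc.1 hx'; omega⟩)
  rcases mem_baseSet_cases hM hB hy with hy' | hy'
  · exact mem_union_left _ (mem_Icc.2 ⟨by omega, by have := mem_Icc.1 hy'; omega⟩)
  · exact mem_union_right _ (add_mem_add hx' hy')

lemma filter_baseSet_le (hB : B ⊆ Icc 3 M) (hC : C ⊆ Icc (M + 1) L) :
    (baseSet B C).filter (fun x => 3 ≤ x ∧ x ≤ M) = B := by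
  ext x
  have := @hB x; have := @hC x
  simp only [baseSet, mem_filter, mem_insert, mem_union, mem_Icc] at *
  grind

lemma filter_baseSet_gt (hM : 2 ≤ M) (hB : B ⊆ Icc 3 M) (hC : C ⊆ Icc (M + 1) L) :
    (baseSet B C).filter (fun x => M < x) = C := by
  ext x
  have := @hB x; have := @hC x
  simp only [baseSet, mem_filter, mem_insert, mem_union, mem_Icc] at *
  grind

end Construction

section Counting

open Finset

lemma card_baseSet_add_self_le {M T s : ℕ} {B C : Finset ℤ} (hM : 2 ≤ M)
    (hB : B ⊆ Icc 3 (M : ℤ)) (hC : C ⊆ Icc ((M : ℤ) + 1) (M + T)) (hs : C.card = s) :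
    (baseSet B C + baseSet B C).card ≤ 2 * M + T + s ^ 2 := by
  have hM' : (2 : ℤ) ≤ M := by exact_mod_cast hM
  calc (baseSet B C + baseSet B C).card
      ≤ (Icc 2 ((M : ℤ) + (M + T)) ∪ (C + C)).card :=
        card_le_card (baseSet_add_self_subset hM' hB hC (by omega))
    _ ≤ (Icc 2 ((M : ℤ) + (M + T))).card + C.card * C.card :=
        (card_union_le _ _).trans (Nat.add_le_add_left card_add_le _)
    _ ≤ 2 * M + T + s ^ 2 := by rw [Int.card_Icc, hs, sq]; omega

theorem card_mul_choose_le_ncard_Lambda {lam : ℝ} {n k D R M T m s : ℕ}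
    (hk : k = m + s + 2) (hM : 2 ≤ M) (hn : D * (M + T) + R ≤ n)
    (hsum : ((2 * M + T + s ^ 2 : ℕ) : ℝ) ≤ lam * k) :
    D * R * ((M - 2).choose m * T.choose s) ≤ (Lambda lam n k).ncard := by
  have hM' : (2 : ℤ) ≤ M := by exact_mod_cast hM
  set X := (Icc (1 : ℤ) D ×ˢ Icc (0 : ℤ) (R - 1)) ×ˢ
    ((Icc (3 : ℤ) M).powersetCard m ×ˢ (Icc ((M : ℤ) + 1) (M + T)).powersetCard s)
  have hX : X.card = D * R * ((M - 2).choose m * T.choose s) := by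
    simp only [X, card_product, card_powersetCard, Int.card_Icc]
    congr 3 <;> omega
  have hmemX {p} (hp : p ∈ X) : ((1 ≤ p.1.1 ∧ p.1.1 ≤ D) ∧ 0 ≤ p.1.2 ∧ p.1.2 ≤ R - 1) ∧
      (p.2.1 ⊆ Icc 3 (M : ℤ) ∧ p.2.1.card = m) ∧
      (p.2.2 ⊆ Icc ((M : ℤ) + 1) (M + T) ∧ p.2.2.card = s) := by
    simpa [X, mem_product, mem_powersetCard] using hp
  have hfin : (Lambda lam n k).Finite :=
    (Icc 1 (n : ℤ)).powerset.finite_toSet.subset fun A hA => mem_powerset.2 hA.1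
  rw [← hX, ← Set.ncard_coe_finset]
  refine Set.ncard_le_ncard_of_injOn (fun p => affineImage p.1.1 p.1.2 (baseSet p.2.1 p.2.2))
    (fun p hp => ?_) (fun p hp q hq hpq => ?_) hfin
  · obtain ⟨⟨⟨hd1, hdD⟩, ha0, haR⟩, ⟨hB, hBm⟩, hC, hCs⟩ := hmemX hp
    refine ⟨affineImage_subset_Icc (L := M + T) (by omega) ?_ ?_ (by omega), ?_, ?_⟩
    · exact baseSet_subset_Icc hM' hB hC (by omega)
    · have : (D : ℤ) * (M + T) + R ≤ n := by exact_mod_cast hn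
      nlinarith
    · rw [card_affineImage _ _ (by omega), card_baseSet hM' hB hC, hBm, hCs, hk]
    · refine le_trans ?_ hsum
      exact_mod_cast (card_affineImage_add_self_le _ _ _).trans
        (card_baseSet_add_self_le hM hB hC hCs)
  · obtain ⟨⟨⟨hd1, -⟩, -⟩, ⟨hB, -⟩, hC, -⟩ := hmemX hp
    obtain ⟨⟨⟨hd1', -⟩, -⟩, ⟨hB', -⟩, hC', -⟩ := hmemX hq
    have hS {B C} (hB : B ⊆ Icc 3 (M : ℤ)) (hC : C ⊆ Icc ((M : ℤ) + 1) (M + T)) :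
        ∀ x ∈ baseSet B C, 1 ≤ x := fun x hx =>
      (mem_Icc.1 (baseSet_subset_Icc hM' hB hC (by omega) hx)).1
    obtain ⟨hd, ha, hbase⟩ := affineImage_injective hd1 hd1' (hS hB hC) (hS hB' hC')
      (one_mem_baseSet _ _) (one_mem_baseSet _ _) (two_mem_baseSet _ _) (two_mem_baseSet _ _) hpq
    have hBB : p.2.1 = q.2.1 := by
      rw [← filter_baseSet_le hB hC, ← filter_baseSet_le hB' hC', hbase]
    have hCC : p.2.2 = q.2.2 := by
      rw [← filter_baseSet_gt hM' hB hC, ← filter_baseSet_gt hM' hB' hC', hbase]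
    exact Prod.ext (Prod.ext hd ha) (Prod.ext hBB hCC)

end Counting

section BinomialBounds

open Real
open scoped Nat

lemma choose_add_le_choose_mul_pow (a m t : ℕ) :
    (a.choose (m + t) : ℝ) ≤ a.choose m * (a / (m + 1)) ^ t := by
  induction t with
  | zero => simp
  | succ t ih =>
    have hstep : (a.choose (m + t + 1) : ℝ) * (m + t + 1) =
        a.choose (m + t) * (a - (m + t) : ℕ) := by
      exact_mod_cast Nat.choose_succ_right_eq a (m + t)
    have hsub : ((a - (m + t) : ℕ) : ℝ) ≤ a := by exact_mod_cast Nat.sub_le a (m + t)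
    have hratio : (a.choose (m + t + 1) : ℝ) ≤ a.choose (m + t) * (a / (m + 1)) := by
      rw [mul_div_assoc', le_div_iff₀ (by positivity)]
      calc (a.choose (m + t + 1) : ℝ) * (m + 1) ≤ a.choose (m + t + 1) * (m + t + 1) := by
            gcongr; linarith [(t.cast_nonneg : (0 : ℝ) ≤ t)]
        _ ≤ a.choose (m + t) * a := by rw [hstep]; gcongr
    calc (a.choose (m + (t + 1)) : ℝ) ≤ a.choose (m + t) * (a / (m + 1)) := hratio
      _ ≤ a.choose m * (a / (m + 1)) ^ t * (a / (m + 1)) := by gcongr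
      _ = a.choose m * (a / (m + 1)) ^ (t + 1) := by ring

lemma choose_le_pow_mul_choose {a b m : ℕ} {ρ : ℝ} (hρ : 0 ≤ ρ)
    (h : ∀ j < m, ((a - j : ℕ) : ℝ) ≤ ρ * (b - j : ℕ)) :
    (a.choose m : ℝ) ≤ ρ ^ m * b.choose m := by
  induction m with
  | zero => simp
  | succ j ih =>
    have hj : (0 : ℝ) < j + 1 := by positivity
    have hstep (c : ℕ) : (c.choose (j + 1) : ℝ) = c.choose j * (c - j : ℕ) / (j + 1) := by
      rw [eq_div_iff hj.ne']; exact_mod_cast Nat.choose_succ_right_eq c j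
    rw [hstep, hstep, div_le_iff₀ hj, mul_div_assoc', div_mul_cancel₀ _ hj.ne']
    calc (a.choose j : ℝ) * (a - j : ℕ) ≤ (ρ ^ j * b.choose j) * (ρ * (b - j : ℕ)) :=
          mul_le_mul (ih fun i hi => h i (by omega)) (h j (by omega)) (by positivity)
            (by positivity)
      _ = ρ ^ (j + 1) * (b.choose j * (b - j : ℕ)) := by ring

lemma choose_le_exp_mul_choose {a b m : ℕ} (hmb : m < b) (hba : b ≤ a) :
    (a.choose m : ℝ) ≤ exp (m * (a - b) / (b - m)) * b.choose m := by
  have hbm : (0 : ℝ) < b - m := by rw [sub_pos]; exact_mod_cast hmb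
  have hab : (b : ℝ) ≤ a := by exact_mod_cast hba
  set ρ : ℝ := 1 + (a - b) / (b - m) with hρ
  have hρ0 : 0 ≤ ρ := by have := div_nonneg (sub_nonneg.2 hab) hbm.le; linarith
  have hterm : ∀ j < m, ((a - j : ℕ) : ℝ) ≤ ρ * (b - j : ℕ) := by
    intro j hj
    have hjm : (j : ℝ) ≤ m := by exact_mod_cast hj.le
    have hgap : ρ * (b - j) - (a - j) = (a - b) * (m - j) / (b - m) := by
      rw [hρ]; field_simp; ring
    rw [Nat.cast_sub (by omega), Nat.cast_sub (by omega), ← sub_nonneg, hgap]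
    exact div_nonneg (mul_nonneg (sub_nonneg.2 hab) (sub_nonneg.2 hjm)) hbm.le
  calc (a.choose m : ℝ) ≤ ρ ^ m * b.choose m := choose_le_pow_mul_choose hρ0 hterm
    _ ≤ exp ((a - b) / (b - m)) ^ m * b.choose m := by
        gcongr; linarith [add_one_le_exp ((a - b) / (b - m) : ℝ)]
    _ = exp (m * (a - b) / (b - m)) * b.choose m := by rw [← exp_nat_mul, mul_div_assoc]

lemma factorial_le_exp_one_mul_sqrt {n : ℕ} (hn : n ≠ 0) :
    (n ! : ℝ) ≤ exp 1 * √n * (n / exp 1) ^ n := by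
  obtain ⟨n, rfl⟩ := Nat.exists_eq_succ_of_ne_zero hn
  have h : Stirling.stirlingSeq (n + 1) ≤ Stirling.stirlingSeq 1 :=
    Stirling.stirlingSeq'_antitone (Nat.zero_le n)
  rw [Stirling.stirlingSeq_one, Stirling.stirlingSeq, div_le_iff₀ (by positivity)] at h
  calc ((n + 1) ! : ℝ)
      ≤ exp 1 / √2 * (√(2 * (n + 1 : ℕ)) * ((n + 1 : ℕ) / exp 1) ^ (n + 1)) := h
    _ = exp 1 * √(n + 1 : ℕ) * ((n + 1 : ℕ) / exp 1) ^ (n + 1) := by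
        rw [Real.sqrt_mul (by norm_num)]; field_simp

lemma pow_mul_exp_div_sqrt_le_choose {T s : ℕ} (hs : s ≠ 0) {x : ℝ} (hx : 0 ≤ x)
    (h : s * (x + 1) ≤ T + 1) :
    x ^ s * exp (s - 1) / √s ≤ T.choose s := by
  have hsT : (s : ℝ) ≤ T + 1 := by nlinarith [(s.cast_nonneg : (0 : ℝ) ≤ s)]
  have hs0 : (0 : ℝ) < s := by positivity
  refine le_trans ?_ (Nat.pow_le_choose s T)
  rw [Nat.cast_sub (by exact_mod_cast hsT)]
  push_cast
  calc x ^ s * exp (s - 1) / √s = (s * x) ^ s / (exp 1 * √s * (s / exp 1) ^ s) := by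
        rw [div_pow, mul_pow, Real.exp_sub, ← Real.exp_nat_mul]; field_simp
    _ ≤ (T + 1 - s) ^ s / s ! := by
        gcongr
        · nlinarith
        · exact factorial_le_exp_one_mul_sqrt hs

end BinomialBounds

section Estimates

open Real

lemma mul_half_pow_mul_exp_le {lam : ℝ} {s : ℕ} (hlam : 2 ^ 30 ≤ lam) (hs : √lam ≤ s)
    (hs' : s ≤ √lam + 1) :
    40 * lam * (lam / 2) ^ (s + 2) * exp (√lam / 256 + 6 * s / 5 + 4)
      ≤ (lam - 1) ^ s * exp (s - 1) / √s := by
  have hlam0 : 0 < lam := by linarith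
  have hsqrt : (2 : ℝ) ^ 15 ≤ √lam := Real.le_sqrt_of_sq_le (by linarith)
  have hs15 : (2 : ℝ) ^ 15 ≤ s := hsqrt.trans hs
  have hs0 : (0 : ℝ) < s := by linarith
  have hlam_le : lam ≤ (s : ℝ) ^ 2 := by
    rw [← Real.sq_sqrt hlam0.le]; gcongr
  have hs_le : (s : ℝ) ≤ lam - 1 := by
    nlinarith [Real.sq_sqrt hlam0.le]
  have hlam1 : 0 < lam - 1 := by linarith
  rw [← log_le_log_iff (by positivity) (by positivity), log_mul (by positivity) (by positivity),
    log_mul (by positivity) (by positivity), log_mul (by positivity) (by positivity), log_pow,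
    log_div hlam0.ne' two_ne_zero, log_exp, log_div (by positivity) (by positivity),
    log_mul (by positivity) (by positivity), log_pow, log_exp, log_sqrt hs0.le]
  have hlog_sub : s * (log lam - log (lam - 1)) ≤ 1 := by
    have h := log_le_sub_one_of_pos (div_pos hlam0 hlam1)
    rw [log_div hlam0.ne' hlam1.ne'] at h
    calc (s : ℝ) * (log lam - log (lam - 1)) ≤ s * (lam / (lam - 1) - 1) := by gcongr
      _ = s / (lam - 1) := by field_simp; ring
      _ ≤ 1 := (div_le_one hlam1).2 hs_le
  have hlog_lam : log lam ≤ 2 * log s := by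
    calc log lam ≤ log ((s : ℝ) ^ 2) := log_le_log hlam0 hlam_le
      _ = 2 * log s := by rw [log_pow]; norm_num
  have hlog_s : log s ≤ s / 90 := by
    have h := log_le_sub_one_of_pos (Real.sqrt_pos.2 hs0)
    rw [log_sqrt hs0.le] at h
    have h181 : (181 : ℝ) ≤ √s := Real.le_sqrt_of_sq_le (by linarith)
    nlinarith [Real.sq_sqrt hs0.le]
  have hlog40 : log 40 ≤ 39 := by linarith [log_le_sub_one_of_pos (by norm_num : (0 : ℝ) < 40)]
  have hlog2 := mul_le_mul_of_nonneg_left log_two_gt_d9.le (by positivity : (0 : ℝ) ≤ s + 2)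
  push_cast
  linarith

lemma choose_le_choose_mul_choose {lam : ℝ} {s k K M m T : ℕ} (hlam : 2 ^ 30 ≤ lam)
    (hs : √lam ≤ s) (hs' : s ≤ √lam + 1) (hk : k = m + (s + 2)) (hmM : m < M) (hMK : M ≤ K)
    (hexp : m * (K - M) / (M - m : ℝ) ≤ 6 * s / 5 + 3)
    (hKm : K / (m + 1 : ℝ) ≤ lam / 2 * exp (1 / (s + 2))) (hT : s * lam ≤ T + 1) :
    40 * lam * exp (√lam / 256) * K.choose k ≤ M.choose m * T.choose s := by
  have hs0 : s ≠ 0 := by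
    rintro rfl
    have : (2 : ℝ) ^ 15 ≤ √lam := Real.le_sqrt_of_sq_le (by linarith)
    norm_num at hs; linarith
  have hpow : (K / (m + 1 : ℝ)) ^ (s + 2) ≤ (lam / 2) ^ (s + 2) * exp 1 := by
    calc (K / (m + 1 : ℝ)) ^ (s + 2) ≤ (lam / 2 * exp (1 / (s + 2))) ^ (s + 2) := by gcongr
      _ = (lam / 2) ^ (s + 2) * exp 1 := by
        rw [mul_pow, ← exp_nat_mul]; push_cast; field_simp
  have hchooseT : (lam - 1) ^ s * exp (s - 1) / √s ≤ T.choose s :=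
    pow_mul_exp_div_sqrt_le_choose hs0 (by linarith) (by linarith)
  calc 40 * lam * exp (√lam / 256) * K.choose k
      ≤ 40 * lam * exp (√lam / 256) *
          (exp (m * (K - M) / (M - m)) * M.choose m * (K / (m + 1 : ℝ)) ^ (s + 2)) := by
        rw [hk]
        gcongr
        exact (choose_add_le_choose_mul_pow K m (s + 2)).trans
          (by gcongr; exact choose_le_exp_mul_choose hmM hMK)
    _ ≤ 40 * lam * exp (√lam / 256) *
          (exp (6 * s / 5 + 3) * M.choose m * ((lam / 2) ^ (s + 2) * exp 1)) := by
        gcongr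
    _ = M.choose m * (40 * lam * (lam / 2) ^ (s + 2) *
          (exp (√lam / 256) * exp (6 * s / 5 + 3) * exp 1)) := by ring
    _ = M.choose m * (40 * lam * (lam / 2) ^ (s + 2) * exp (√lam / 256 + 6 * s / 5 + 4)) := by
        rw [← exp_add, ← exp_add]; ring_nf
    _ ≤ M.choose m * T.choose s := by
        gcongr
        exact (mul_half_pow_mul_exp_le hlam hs hs').trans hchooseT

end Estimates

section Parameters

open Real

lemma exists_mul_add_le_and_sq_le {n K L : ℕ} (hL : 0 < L) (hLK : 4 * L ≤ 5 * K)
    (hn : 2 * K ≤ n) (hn8 : 8 ≤ n) :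
    ∃ D R : ℕ, D * L + R ≤ n ∧ n ^ 2 ≤ 80 * K * (D * R) := by
  refine ⟨n / (4 * L) + 1, n / 8, ?_, ?_⟩
  · have h1 := Nat.div_mul_le_self n (4 * L)
    have h2 := Nat.div_mul_le_self n 8
    nlinarith
  · have hD : n ≤ 4 * L * (n / (4 * L) + 1) := by
      have := Nat.lt_div_mul_add (a := n) (by omega : 0 < 4 * L)
      linarith
    have hR : n ≤ 16 * (n / 8) := by omega
    calc n ^ 2 = n * n := sq n
      _ ≤ 4 * L * (n / (4 * L) + 1) * (16 * (n / 8)) := Nat.mul_le_mul hD hR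
      _ = 16 * (4 * L) * ((n / (4 * L) + 1) * (n / 8)) := by ring
      _ ≤ 16 * (5 * K) * ((n / (4 * L) + 1) * (n / 8)) := by gcongr
      _ = 80 * K * ((n / (4 * L) + 1) * (n / 8)) := by ring

lemma div_succ_le_mul_exp {lam : ℝ} {s k K m : ℕ} (hlam : 0 < lam) (hK : (K : ℝ) = lam * k / 2)
    (hk : k = m + s + 2) (hks : (s + 3) * (s + 1) ≤ k) :
    K / (m + 1 : ℝ) ≤ lam / 2 * exp (1 / (s + 2)) := by
  have hk' : ((s : ℝ) + 3) * (s + 1) ≤ k := by exact_mod_cast hks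
  have hkm : (k : ℝ) = m + s + 2 := by exact_mod_cast hk
  calc K / (m + 1 : ℝ) ≤ lam / 2 * (1 / (s + 2) + 1) := by
        rw [div_le_iff₀ (by positivity), hK]
        field_simp
        nlinarith
    _ ≤ lam / 2 * exp (1 / (s + 2)) := by gcongr; exact add_one_le_exp _

lemma mul_div_sub_le {lam s k K E m : ℝ} (hs0 : 0 ≤ s) (hE0 : 0 ≤ E) (hm0 : 0 ≤ m) (hmk : m ≤ k)
    (hK : K = lam * k / 2) (hE : 2 * E ≤ s * lam + s ^ 2 + 1) (hs : s ^ 2 + 5 ≤ 2 * lam)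
    (hgap : 6 * (E + 2 + k) ≤ K) :
    m * (E + 2) / (K - E - 2 - m) ≤ 6 * s / 5 + 3 := by
  have hk0 : 0 ≤ k := hm0.trans hmk
  have hden : 5 * K / 6 ≤ K - E - 2 - m := by linarith
  rw [div_le_iff₀ (by linarith)]
  calc m * (E + 2) ≤ k * (E + 2) := by gcongr
    _ ≤ (s + 2) * K := by
        nlinarith [mul_le_mul_of_nonneg_left hE hk0, mul_le_mul_of_nonneg_left hs hk0]
    _ ≤ (6 * s / 5 + 3) * (5 * K / 6) := by nlinarith
    _ ≤ (6 * s / 5 + 3) * (K - E - 2 - m) := by gcongr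

lemma exists_choose_params {lam : ℝ} {s k K : ℕ} (hlam : 2 ^ 30 ≤ lam) (hs : √lam ≤ s)
    (hs' : s ≤ √lam + 1) (hk : 1000 * (s + 2) ^ 2 ≤ k) (hK : (K : ℝ) = lam * k / 2) :
    ∃ M T m : ℕ, k = m + s + 2 ∧ 2 ≤ M ∧ 4 * (M + T) ≤ 5 * K ∧
      ((2 * M + T + s ^ 2 : ℕ) : ℝ) ≤ lam * k ∧
      40 * lam * exp (√lam / 256) * K.choose k ≤ (M - 2).choose m * T.choose s := by
  have hlam0 : 0 < lam := by linarith
  have hsqrt : (2 : ℝ) ^ 15 ≤ √lam := Real.le_sqrt_of_sq_le (by linarith)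
  have hs_sq : (s : ℝ) ^ 2 + 5 ≤ 2 * lam := by nlinarith [Real.sq_sqrt hlam0.le]
  have hk' : 1000 * ((s : ℝ) + 2) ^ 2 ≤ k := by exact_mod_cast hk
  set T := ⌊s * lam⌋₊
  have hT_le : (T : ℝ) ≤ s * lam := Nat.floor_le (by positivity)
  have hT_ge : s * lam ≤ T + 1 := (Nat.lt_floor_add_one _).le
  set E := (T + s ^ 2 + 1) / 2
  have hE_le : ((2 * E : ℕ) : ℝ) ≤ T + s ^ 2 + 1 := by
    exact_mod_cast (by omega : 2 * E ≤ T + s ^ 2 + 1)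
  have hgap : 6 * (E + 2 + k) ≤ K := by
    have : 6 * ((E : ℝ) + 2 + k) ≤ K := by push_cast at hE_le; nlinarith
    exact_mod_cast this
  have h4T : 4 * T ≤ K := by
    have : 4 * (T : ℝ) ≤ K := by nlinarith
    exact_mod_cast this
  have hsk : (s + 3) * (s + 1) ≤ k := by nlinarith
  have hs2k : s + 2 ≤ k := by nlinarith
  refine ⟨K - E, T, k - (s + 2), by omega, by omega, by omega, ?_, ?_⟩
  · have : 2 * (K - E) + T + s ^ 2 ≤ 2 * K := by omega
    calc ((2 * (K - E) + T + s ^ 2 : ℕ) : ℝ) ≤ ((2 * K : ℕ) : ℝ) := by exact_mod_cast this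
      _ = lam * k := by push_cast; linarith
  · have hM : (((K - E - 2 : ℕ) : ℝ)) = K - E - 2 := by
      push_cast [Nat.cast_sub (show 2 ≤ K - E by omega), Nat.cast_sub (show E ≤ K by omega)]
      ring
    have hm : ((k - (s + 2) : ℕ) : ℝ) ≤ k := by exact_mod_cast Nat.sub_le k (s + 2)
    refine choose_le_choose_mul_choose hlam hs hs' (by omega) (by omega) (by omega) ?_
      (div_succ_le_mul_exp hlam0 hK (by omega) hsk) hT_ge
    rw [hM, show (K : ℝ) - (K - E - 2) = E + 2 by ring]
    push_cast at hE_le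
    exact mul_div_sub_le (E := E) (by positivity) (by positivity) (by positivity) hm hK
      (by linarith) hs_sq (by exact_mod_cast hgap)

end Parameters

/-- lower bound `|Λ(n,k)| ≥ exp(2⁻⁸√λ)·(n²/k)·binom(λk/2,k)` for
large `λ`. Here `K` denotes the natural number `λk/2`. -/
theorem statement19 (lam : ℝ) (hlam : 2 ^ 30 ≤ lam) :
    ∃ N : ℕ, ∀ n k K : ℕ, N ≤ n → N ≤ k → lam * k ≤ (n : ℝ) →
      (K : ℝ) = lam * k / 2 →
      Real.exp ((2 : ℝ) ^ (-8 : ℤ) * Real.sqrt lam) * ((n : ℝ) ^ 2 / k) *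
          (K.choose k : ℝ)
        ≤ ((Lambda lam n k).ncard : ℝ) := by
  set s := ⌈√lam⌉₊
  refine ⟨1000 * (s + 2) ^ 2, fun n k K _ hk hnk hK => ?_⟩
  have hs : √lam ≤ s := Nat.le_ceil _
  have hs' : (s : ℝ) ≤ √lam + 1 := (Nat.ceil_lt_add_one (Real.sqrt_nonneg _)).le
  obtain ⟨M, T, m, hkm, hM, hMT, hsum, hchoose⟩ := exists_choose_params hlam hs hs' hk hK
  have hk0 : (1 : ℝ) ≤ k := by exact_mod_cast (by nlinarith : 1 ≤ k)
  have hKn : 2 * K ≤ n := by exact_mod_cast (by push_cast; linarith : ((2 * K : ℕ) : ℝ) ≤ n)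
  have hn8 : 8 ≤ n := by exact_mod_cast (by nlinarith : (8 : ℝ) ≤ n)
  obtain ⟨D, R, hfit, hsq⟩ := exists_mul_add_le_and_sq_le (by omega) hMT hKn hn8
  have hsq' : (n : ℝ) ^ 2 / k ≤ 40 * lam * (D * R) := by
    have : (n : ℝ) ^ 2 ≤ 80 * K * (D * R) := by exact_mod_cast hsq
    rw [hK] at this
    rw [div_le_iff₀ (by linarith)]
    linarith
  have hcount := card_mul_choose_le_ncard_Lambda (lam := lam) hkm hM hfit hsum
  rw [show (2 : ℝ) ^ (-8 : ℤ) * √lam = √lam / 256 by norm_num; ring]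
  calc Real.exp (√lam / 256) * ((n : ℝ) ^ 2 / k) * K.choose k
      ≤ Real.exp (√lam / 256) * (40 * lam * (D * R)) * K.choose k := by gcongr
    _ = D * R * (40 * lam * Real.exp (√lam / 256) * K.choose k) := by ring
    _ ≤ D * R * ((M - 2).choose m * T.choose s) := by gcongr
    _ ≤ (Lambda lam n k).ncard := by exact_mod_cast hcount
end
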